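/- Let d ≥ 4 be even. If f ∈ ℂ[x_1,x_2] is a singular homogeneous polynomial of degree d such that H(f) = α·(x_1x_2)^{d−2} for some nonzero α ∈ ℂ, then f = a·x_1^{d/2}x_2^{d/2} for some nonzero constant a ∈ ℂ. -/

import Mathlib

open MvPolynomial

noncomputable def hessDet {n : ℕ} (f : MvPolynomial (Fin n) ℂ) : MvPolynomial (Fin n) ℂ :=
  Matrix.det (Matrix.of fun i j => pderiv i (pderiv j f))

/-!
At a singular point `p ≠ 0` of `f` the Hessian matrix annihilates `p` (Euler's identity applied
to the partial derivatives), so `H(f)(p) = 0`; hence `p` lies on a coordinate axis and, after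
possibly swapping the variables, `f(0, 1) = 0`.

Write `d = n + 2`. The dehomogenization `F = f(x, 1)` satisfies
`(n + 2) F F'' - (n + 1) F'² = β xⁿ` with `β ≠ 0`. A nonzero root `r` of `F` is simple, as at
a multiple root the left side vanishes while `β rⁿ ≠ 0`. Simple roots are excluded as well:
`S = (x F' - (n + 2) F)'` satisfies `(n + 2) F S' = n F' S`, so at a simple root of `F` the
order `ν` of `S` would satisfy `(n + 2) ν = n`. Here `S ≠ 0` because `F(0) = 0`; the solutions
with `S = 0` are `a x^(n+2) + e`, i.e. the nonsingular forms `a x₁^d + e x₂^d`. So `F = a x^m`,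
and the equation forces `2 m = d`.
-/

open scoped Polynomial

namespace Polynomial

theorem mul_derivative_pow {R : Type*} [CommSemiring R] (p : R[X]) (n : ℕ) :
    p * derivative (p ^ n) = n * p ^ n * derivative p := by
  rcases n with _ | n
  · simp
  · rw [derivative_pow, C_eq_natCast, Nat.add_sub_cancel, pow_succ]
    ring

section CommRing

variable {R : Type*} [CommRing R]

/-- For a binary form `f` of degree `n + 2` and `F = f(x, 1)`, the dehomogenized Hessian
`H(f)(x, 1)` is `(n + 1) * reducedHessian n F`. -/
noncomputable def reducedHessian (n : ℕ) (F : R[X]) : R[X] :=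
  ((n + 2 : ℕ) : R[X]) * (F * derivative (derivative F))
    - ((n + 1 : ℕ) : R[X]) * derivative F ^ 2

noncomputable def eulerDefect (k : ℕ) (F : R[X]) : R[X] := X * derivative F - (k : R[X]) * F

theorem X_mul_reducedHessian (n : ℕ) (F : R[X]) :
    X * reducedHessian n F = ((n + 2 : ℕ) : R[X]) * F * derivative (eulerDefect (n + 2) F)
      - ((n + 1 : ℕ) : R[X]) * derivative F * eulerDefect (n + 2) F := by
  simp only [reducedHessian, eulerDefect, derivative_mul, derivative_sub, derivative_X,
    derivative_natCast]
  push_cast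
  ring

theorem mul_derivative_derivative_eulerDefect {n : ℕ} {β : R} {F : R[X]}
    (hE : reducedHessian n F = C β * X ^ n) :
    ((n + 2 : ℕ) : R[X]) * (F * derivative (derivative (eulerDefect (n + 2) F)))
      = n * (derivative F * derivative (eulerDefect (n + 2) F)) := by
  have hXE : X * derivative (C β * X ^ n) = (n : R[X]) * (C β * X ^ n) := by
    rw [derivative_C_mul, mul_left_comm, mul_derivative_pow]
    simp
    ring
  rw [← hE] at hXE
  simp only [reducedHessian, eulerDefect, derivative_mul, derivative_sub, derivative_add,
    derivative_X, derivative_natCast, derivative_sq, derivative_one, derivative_zero,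
    C_ofNat] at hXE ⊢
  push_cast at hXE ⊢
  linear_combination hXE

end CommRing

section Field

variable {K : Type*} [Field K]

theorem exists_eq_C_mul_X_pow_of_forall_isRoot [IsAlgClosed K] {p : K[X]} (hp : p ≠ 0)
    (h : ∀ r, p.IsRoot r → r = 0) : ∃ a m, a ≠ 0 ∧ p = C a * X ^ m := by
  have hroots : p.roots = Multiset.replicate (Multiset.card p.roots) 0 :=
    Multiset.eq_replicate_card.mpr fun r hr => h r (isRoot_of_mem_roots hr)
  refine ⟨p.leadingCoeff, Multiset.card p.roots, leadingCoeff_ne_zero.mpr hp, ?_⟩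
  conv_lhs => rw [← C_leadingCoeff_mul_prod_multiset_X_sub_C
    (splits_iff_card_roots.mp (IsAlgClosed.splits p))]
  rw [hroots]
  simp

theorem mul_rootMultiplicity_eq_of_mul_derivative_eq [CharZero K] {F S : K[X]} {r : K}
    {a b : ℕ} (hS : S ≠ 0) (hr : F.IsRoot r) (hr' : (derivative F).eval r ≠ 0)
    (h : (a : K[X]) * (F * derivative S) = b * (derivative F * S)) :
    a * rootMultiplicity r S = b := by
  obtain ⟨B, hSB, hBr⟩ := S.exists_eq_pow_rootMultiplicity_mul_and_not_dvd hS r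
  rw [dvd_iff_isRoot] at hBr
  obtain ⟨A, rfl⟩ := dvd_iff_isRoot.mpr hr
  set ν := rootMultiplicity r S
  have hXS : (X - C r) * derivative S =
      (X - C r) ^ ν * ((ν : K[X]) * B + (X - C r) * derivative B) := by
    rw [hSB, derivative_mul, mul_add, ← mul_assoc, mul_derivative_pow]
    simp only [derivative_sub, derivative_X, derivative_C, sub_zero, mul_one]
    ring
  have hcancel : (a : K[X]) * A * ((ν : K[X]) * B + (X - C r) * derivative B)
      = (b : K[X]) * derivative ((X - C r) * A) * B := by
    refine mul_left_cancel₀ (pow_ne_zero ν (X_sub_C_ne_zero r)) ?_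
    linear_combination h - ((a : K[X]) * A) * hXS + ((b : K[X]) * derivative ((X - C r) * A)) * hSB
  have hA : (derivative ((X - C r) * A)).eval r = A.eval r := by simp
  have hAB : A.eval r * B.eval r ≠ 0 := mul_ne_zero (hA ▸ hr') hBr
  have hcancel_r := congrArg (eval r) hcancel
  simp only [eval_mul, eval_add, eval_natCast, eval_sub, eval_X, eval_C, sub_self, zero_mul,
    add_zero, hA] at hcancel_r
  have hK : ((a * ν : ℕ) : K) * (A.eval r * B.eval r) = (b : K) * (A.eval r * B.eval r) := by
    push_cast
    linear_combination hcancel_r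
  exact_mod_cast mul_right_cancel₀ hAB hK

variable {n : ℕ} {β : K} {F : K[X]}

theorem eval_derivative_ne_zero_of_reducedHessian_eq (hβ : β ≠ 0)
    (hE : reducedHessian n F = C β * X ^ n) {r : K} (hr0 : r ≠ 0) (hr : F.IsRoot r) :
    (derivative F).eval r ≠ 0 := by
  intro hr'
  have h := congrArg (eval r) hE
  simp [reducedHessian, hr.eq_zero, hr', hβ, hr0] at h

theorem two_mul_eq_of_reducedHessian_C_mul_X_pow {a : K} {m : ℕ} (hβ : β ≠ 0)
    (hE : reducedHessian n (C a * X ^ m) = C β * X ^ n) : 2 * m = n + 2 := by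
  set F := C a * X ^ m with hF
  have h1 : X * derivative F = (m : K[X]) * F := by
    rw [hF, derivative_C_mul, mul_left_comm, mul_derivative_pow]
    simp only [derivative_X, mul_one]
    ring
  have h2 : X ^ 2 * derivative (derivative F) = ((m : K[X]) * (m : K[X]) - (m : K[X])) * F := by
    have h := congrArg (X * derivative ·) h1
    simp only [derivative_mul, derivative_X, derivative_natCast, zero_mul, zero_add, one_mul] at h
    linear_combination h + ((m : K[X]) - 1) * h1
  have h3 : X ^ 2 * (C β * X ^ n)
      = ((m : K[X]) * (m : K[X]) - ((n : K[X]) + 2) * (m : K[X])) * F ^ 2 := by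
    rw [← hE, reducedHessian]
    push_cast
    linear_combination ((n : K[X]) + 2) * F * h2
      - ((n : K[X]) + 1) * (X * derivative F + (m : K[X]) * F) * h1
  have h4 : C β * X ^ (n + 2) = C ((m * m - (n + 2) * m) * a ^ 2) * X ^ (2 * m) := by
    simp only [map_mul, map_sub, map_add, map_natCast, map_ofNat, map_pow]
    linear_combination h3
  rw [C_mul_X_pow_eq_monomial, C_mul_X_pow_eq_monomial, monomial_eq_monomial_iff] at h4
  rcases h4 with h4 | h4
  · exact h4.1.symm
  · exact absurd h4.1 hβ

variable [CharZero K]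

theorem derivative_eulerDefect_ne_zero (hβ : β ≠ 0) (hE : reducedHessian n F = C β * X ^ n)
    (h0 : F.eval 0 = 0) : derivative (eulerDefect (n + 2) F) ≠ 0 := by
  intro hS
  have hT : eulerDefect (n + 2) F = 0 := by
    rw [eq_C_of_derivative_eq_zero hS, coeff_zero_eq_eval_zero]
    simp [eulerDefect, h0]
  have hX := X_mul_reducedHessian n F
  rw [hE, hS, hT] at hX
  simp [hβ] at hX

theorem eq_zero_of_isRoot_of_reducedHessian_eq (hn : 1 ≤ n) (hβ : β ≠ 0)
    (hE : reducedHessian n F = C β * X ^ n) (h0 : F.eval 0 = 0) {r : K} (hr : F.IsRoot r) :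
    r = 0 := by
  by_contra hr0
  have h := mul_rootMultiplicity_eq_of_mul_derivative_eq (derivative_eulerDefect_ne_zero hβ hE h0)
    hr (eval_derivative_ne_zero_of_reducedHessian_eq hβ hE hr0 hr)
    (mul_derivative_derivative_eulerDefect hE)
  rcases Nat.eq_zero_or_pos (rootMultiplicity r (derivative (eulerDefect (n + 2) F))) with h' | h'
  · rw [h'] at h
    omega
  · nlinarith

theorem exists_eq_C_mul_X_pow_of_reducedHessian_eq [IsAlgClosed K] (hn : 1 ≤ n) (hβ : β ≠ 0)
    (hE : reducedHessian n F = C β * X ^ n) (h0 : F.eval 0 = 0) :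
    ∃ a m, a ≠ 0 ∧ 2 * m = n + 2 ∧ F = C a * X ^ m := by
  have hF : F ≠ 0 := by
    rintro rfl
    simp [reducedHessian, hβ] at hE
  obtain ⟨a, m, ha, rfl⟩ := exists_eq_C_mul_X_pow_of_forall_isRoot hF
    fun r => eq_zero_of_isRoot_of_reducedHessian_eq hn hβ hE h0
  exact ⟨a, m, ha, two_mul_eq_of_reducedHessian_C_mul_X_pow hβ hE, rfl⟩

end Field

end Polynomial

namespace MvPolynomial

open Polynomial (derivative reducedHessian)

theorem pderiv_pderiv_comm {σ R : Type*} [CommSemiring R] (i j : σ) (f : MvPolynomial σ R) :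
    pderiv i (pderiv j f) = pderiv j (pderiv i f) := by
  have hX : ∀ i j k : σ, pderiv i (pderiv j (X k : MvPolynomial σ R)) = 0 := by
    intro i j k
    classical
    rw [pderiv_X, Pi.single_apply]
    split_ifs <;> simp
  induction f using MvPolynomial.induction_on with
  | C a => simp
  | add p q hp hq => simp only [map_add, hp, hq]
  | mul_X p k hp =>
    simp only [pderiv_mul, map_add, hX, mul_zero, add_zero, hp]
    ring

theorem IsHomogeneous.eval_smul {σ R : Type*} [CommSemiring R] [Fintype σ]
    {φ : MvPolynomial σ R} {n : ℕ} (hφ : φ.IsHomogeneous n) (c : R) (x : σ → R) :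
    eval (c • x) φ = c ^ n * eval x φ := by
  rw [eval_eq', eval_eq', Finset.mul_sum]
  refine Finset.sum_congr rfl fun u hu => ?_
  simp only [Pi.smul_apply, smul_eq_mul, mul_pow, Finset.prod_mul_distrib,
    Finset.prod_pow_eq_pow_sum]
  rw [← hφ (mem_support_iff.mp hu), Finsupp.weight_apply, Finsupp.sum_fintype] <;> simp
  ring

theorem IsHomogeneous.eval_eq_zero_of_forall_eval_pderiv_eq_zero {σ K : Type*} [Field K]
    [CharZero K] [Fintype σ] {φ : MvPolynomial σ K} {n : ℕ} (hφ : φ.IsHomogeneous n)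
    (hn : n ≠ 0) {p : σ → K} (hp : ∀ i, eval p (pderiv i φ) = 0) : eval p φ = 0 := by
  have h := congrArg (eval p) hφ.sum_X_mul_pderiv
  simp [hp, hn] at h
  exact h

theorem IsHomogeneous.eval_zero_one_eq_zero_or_eval_one_zero_eq_zero {K : Type*} [Field K]
    {d : ℕ} {f : MvPolynomial (Fin 2) K} (hf : f.IsHomogeneous d) {p : Fin 2 → K} (hp : p ≠ 0)
    (hp01 : p 0 * p 1 = 0) (hfp : eval p f = 0) : eval ![0, 1] f = 0 ∨ eval ![1, 0] f = 0 := by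
  rcases mul_eq_zero.mp hp01 with h0 | h1
  · have hp1 : p 1 ≠ 0 := fun h1 => hp (_root_.funext fun i => by fin_cases i <;> simp [h0, h1])
    have hp : p = p 1 • ![0, 1] := _root_.funext fun i => by fin_cases i <;> simp [h0]
    rw [hp, hf.eval_smul] at hfp
    exact Or.inl ((mul_eq_zero.mp hfp).resolve_left (pow_ne_zero _ hp1))
  · have hp0 : p 0 ≠ 0 := fun h0 => hp (_root_.funext fun i => by fin_cases i <;> simp [h0, h1])
    have hp : p = p 0 • ![1, 0] := _root_.funext fun i => by fin_cases i <;> simp [h1]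
    rw [hp, hf.eval_smul] at hfp
    exact Or.inr ((mul_eq_zero.mp hfp).resolve_left (pow_ne_zero _ hp0))

theorem eval_hessDet_eq_zero {n d : ℕ} {f : MvPolynomial (Fin n) ℂ} (hf : f.IsHomogeneous d)
    {p : Fin n → ℂ} (hp : p ≠ 0) (hpf : ∀ i, eval p (pderiv i f) = 0) :
    eval p (hessDet f) = 0 := by
  rw [hessDet, RingHom.map_det]
  refine Matrix.exists_vecMul_eq_zero_iff.mp ⟨p, hp, ?_⟩
  funext j
  have h := congrArg (eval p) (hf.pderiv (i := j)).sum_X_mul_pderiv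
  simpa [Matrix.vecMul, dotProduct, hpf] using h

theorem hessDet_rename {n : ℕ} (e : Fin n ≃ Fin n) (f : MvPolynomial (Fin n) ℂ) :
    hessDet (rename e f) = rename e (hessDet f) := by
  have hM : (Matrix.of fun i j => pderiv i (pderiv j (rename e f))) =
      (rename e).toRingHom.mapMatrix
        ((Matrix.of fun i j => pderiv i (pderiv j f)).submatrix e.symm e.symm) := by
    ext i j
    simp [← pderiv_rename e.injective]
  rw [hessDet, hessDet, hM, ← RingHom.map_det, Matrix.det_submatrix_equiv_self]
  rfl

theorem hessDet_fin_two (f : MvPolynomial (Fin 2) ℂ) :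
    hessDet f = pderiv 0 (pderiv 0 f) * pderiv 1 (pderiv 1 f) - pderiv 0 (pderiv 1 f) ^ 2 := by
  rw [hessDet, Matrix.det_fin_two]
  simp only [Matrix.of_apply]
  rw [pderiv_pderiv_comm 1 0, sq]

noncomputable def dehomogenize {R : Type*} [CommRing R] : MvPolynomial (Fin 2) R →ₐ[R] R[X] :=
  aeval ![Polynomial.X, 1]

section Dehomogenize

variable {R : Type*} [CommRing R]

@[simp]
theorem dehomogenize_C (a : R) : dehomogenize (C a : MvPolynomial (Fin 2) R) = Polynomial.C a := by
  simp [dehomogenize]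

@[simp]
theorem dehomogenize_X_zero : dehomogenize (X 0 : MvPolynomial (Fin 2) R) = Polynomial.X := by
  simp [dehomogenize]

@[simp]
theorem dehomogenize_X_one : dehomogenize (X 1 : MvPolynomial (Fin 2) R) = 1 := by
  simp [dehomogenize]

theorem dehomogenize_pderiv_zero (f : MvPolynomial (Fin 2) R) :
    dehomogenize (pderiv 0 f) = derivative (dehomogenize f) := by
  induction f using MvPolynomial.induction_on with
  | C a => simp
  | add p q hp hq => simp only [map_add, hp, hq]
  | mul_X p i hp =>
    rw [pderiv_mul, map_add, map_mul, map_mul, map_mul, hp, Polynomial.derivative_mul]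
    fin_cases i <;> simp [mul_comm]

theorem eval_dehomogenize (t : R) (f : MvPolynomial (Fin 2) R) :
    (dehomogenize f).eval t = eval ![t, 1] f := by
  rw [dehomogenize, ← Polynomial.coe_aeval_eq_eval, comp_aeval_apply]
  change _ = aeval ![t, 1] f
  congr 2
  funext i
  fin_cases i <;> simp

theorem IsHomogeneous.eq_of_dehomogenize_eq {n : ℕ} {f g : MvPolynomial (Fin 2) R}
    (hf : f.IsHomogeneous n) (hg : g.IsHomogeneous n) (h : dehomogenize f = dehomogenize g) :
    f = g := by
  rw [← Polynomial.homogenize_eq_of_isHomogeneous hf rfl,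
    ← Polynomial.homogenize_eq_of_isHomogeneous hg rfl]
  exact congrArg (Polynomial.homogenize · n) h

theorem IsHomogeneous.X_mul_derivative_dehomogenize_add {n : ℕ} {f : MvPolynomial (Fin 2) R}
    (hf : f.IsHomogeneous n) :
    Polynomial.X * derivative (dehomogenize f) + dehomogenize (pderiv 1 f)
      = (n : R[X]) * dehomogenize f := by
  have h := congrArg dehomogenize hf.sum_X_mul_pderiv
  simpa [Fin.sum_univ_two, dehomogenize_pderiv_zero] using h

end Dehomogenize

theorem IsHomogeneous.dehomogenize_hessDet {n : ℕ} {f : MvPolynomial (Fin 2) ℂ}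
    (hf : f.IsHomogeneous (n + 2)) :
    dehomogenize (hessDet f) = ((n + 1 : ℕ) : ℂ[X]) * reducedHessian n (dehomogenize f) := by
  have h0 := hf.X_mul_derivative_dehomogenize_add
  have h0' := congrArg derivative h0
  have hf1 : (pderiv 1 f).IsHomogeneous (n + 1) := hf.pderiv
  have h1 := hf1.X_mul_derivative_dehomogenize_add
  simp only [Polynomial.derivative_add, Polynomial.derivative_mul, Polynomial.derivative_X,
    Polynomial.derivative_natCast, zero_mul, zero_add, one_mul] at h0'
  rw [hessDet_fin_two, map_sub, map_mul, map_pow, dehomogenize_pderiv_zero,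
    dehomogenize_pderiv_zero, dehomogenize_pderiv_zero, reducedHessian]
  push_cast at h0 h0' h1 ⊢
  set F := dehomogenize f
  set Y := dehomogenize (pderiv 1 f)
  linear_combination derivative (derivative F) * h1
    + ((n : ℂ[X]) + 1) * derivative (derivative F) * h0
    - (derivative Y + ((n : ℂ[X]) + 1) * derivative F) * h0'

theorem IsHomogeneous.eq_C_mul_X_pow_mul_X_pow_of_eval_zero_one {n : ℕ}
    {f : MvPolynomial (Fin 2) ℂ} (hf : f.IsHomogeneous (n + 2)) (hn : 1 ≤ n) {α : ℂ}
    (hα : α ≠ 0) (hH : hessDet f = C α * (X 0 * X 1) ^ n) (h01 : eval ![0, 1] f = 0) :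
    ∃ a m, a ≠ 0 ∧ 2 * m = n + 2 ∧ f = C a * (X 0 ^ m * X 1 ^ m) := by
  have hn1 : ((n + 1 : ℕ) : ℂ) ≠ 0 := Nat.cast_ne_zero.mpr n.succ_ne_zero
  have hE : reducedHessian n (dehomogenize f)
      = Polynomial.C (α / (n + 1 : ℕ)) * Polynomial.X ^ n := by
    refine mul_left_cancel₀ (Nat.cast_ne_zero.mpr n.succ_ne_zero : ((n + 1 : ℕ) : ℂ[X]) ≠ 0) ?_
    rw [← hf.dehomogenize_hessDet, hH, ← Polynomial.C_eq_natCast, ← mul_assoc, ← map_mul,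
      mul_div_cancel₀ _ hn1]
    simp
  obtain ⟨a, m, ha, hm, hF⟩ :=
    Polynomial.exists_eq_C_mul_X_pow_of_reducedHessian_eq hn (div_ne_zero hα hn1) hE
      (by rw [eval_dehomogenize, h01])
  refine ⟨a, m, ha, hm, hf.eq_of_dehomogenize_eq ?_ ?_⟩
  · rw [← hm, two_mul]
    exact ((isHomogeneous_X_pow 0 m).mul (isHomogeneous_X_pow 1 m)).C_mul a
  · simp [hF]

theorem IsHomogeneous.eq_C_mul_X_pow_mul_X_pow_of_hessDet {n : ℕ} {f : MvPolynomial (Fin 2) ℂ}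
    (hf : f.IsHomogeneous (n + 2)) (hn : 1 ≤ n) {α : ℂ} (hα : α ≠ 0)
    (hH : hessDet f = C α * (X 0 * X 1) ^ n) (h : eval ![0, 1] f = 0 ∨ eval ![1, 0] f = 0) :
    ∃ a m, a ≠ 0 ∧ 2 * m = n + 2 ∧ f = C a * (X 0 ^ m * X 1 ^ m) := by
  rcases h with h01 | h10
  · exact hf.eq_C_mul_X_pow_mul_X_pow_of_eval_zero_one hn hα hH h01
  set e := Equiv.swap (0 : Fin 2) 1
  have hg : (rename e f).IsHomogeneous (n + 2) := hf.rename_isHomogeneous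
  have hgH : hessDet (rename e f) = C α * (X 0 * X 1) ^ n := by
    rw [hessDet_rename, hH]
    simp [e, mul_comm]
  have hg01 : eval ![0, 1] (rename e f) = 0 := by
    have he : ![(0 : ℂ), 1] ∘ e = ![1, 0] := by
      ext i
      fin_cases i <;> rfl
    rw [eval_rename, he, h10]
  obtain ⟨a, m, ha, hm, hga⟩ := hg.eq_C_mul_X_pow_mul_X_pow_of_eval_zero_one hn hα hgH hg01
  refine ⟨a, m, ha, hm, ?_⟩
  have hfg := congrArg (rename e) hga
  rw [rename_rename, show ⇑e ∘ ⇑e = id from _root_.funext (Equiv.swap_apply_self 0 1),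
    rename_id] at hfg
  simpa [e, mul_comm] using hfg

end MvPolynomial

theorem singular_binary_even (d : ℕ) (hd : 4 ≤ d)
    (f : MvPolynomial (Fin 2) ℂ) (hf : f.IsHomogeneous d)
    (α : ℂ) (hα : α ≠ 0) (hH : hessDet f = C α * (X 0 * X 1) ^ (d - 2))
    (hsing : ∃ p : Fin 2 → ℂ, p ≠ 0 ∧ ∀ i, eval p (pderiv i f) = 0) :
    ∃ a : ℂ, a ≠ 0 ∧ f = C a * (X 0 ^ (d / 2) * X 1 ^ (d / 2)) := by
  obtain ⟨n, rfl⟩ : ∃ n, d = n + 2 := ⟨d - 2, by omega⟩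
  obtain ⟨p, hp, hpf⟩ := hsing
  have hp01 : p 0 * p 1 = 0 := by
    simpa [hH, hα, show n ≠ 0 by omega] using eval_hessDet_eq_zero hf hp hpf
  have hfp : eval p f = 0 := hf.eval_eq_zero_of_forall_eval_pderiv_eq_zero (by omega) hpf
  obtain ⟨a, m, ha, hm, rfl⟩ := hf.eq_C_mul_X_pow_mul_X_pow_of_hessDet (by omega) hα hH
    (hf.eval_zero_one_eq_zero_or_eval_one_zero_eq_zero hp hp01 hfp)
  exact ⟨a, ha, by rw [show (n + 2) / 2 = m by omega]⟩
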